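/- arXiv:2603.13235 — 4 statements merged into one kernel-verified Lean document; each statement's English description precedes it below -/
import Mathlib

section
/- Let (Ω, P) be a probability space, let n ≥ 2 (number of tasks), τ ≥ 1 (number of signature components per task), d ≥ 1 (embedding dimension), let δ ≥ 0, σ² > 0 and κ ∈ ℝ. Fix a pair (k,t), let Z_k be a real random variable and let (Z_{i,s}) for i ∈ {1,…,n}\{k}, s ∈ {1,…,τ} be real random variables, and let E be an event. Assume: (H1) E ⊆ {ω : Z_k(ω) > min over (i,s) with i ≠ k of (Z_{i,s}(ω) + κ)}; (H2) for every θ ≥ d, P(Z_k > θ) ≤ exp(-(θ-d)²/(4d + 2(θ-d))); (H3) for every (i,s) with i ≠ k and every u ≥ 0, P(Z_{i,s} < (1+δ)d − u) ≤ exp(−u²/(2σ²d + (2/3)u)). If moreover δ ≥ max(0, −2κ/d), then P(E) ≤ exp(−dδ²/(4δ + 16)) + (n−1)·τ·exp(−(dδ/2 + κ)²/(2σ²d + (2/3)(dδ/2 + κ))). -/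
/-!
On the error event either the correct-cluster statistic `Zk` exceeds the midpoint
`θ = d + dδ/2` between the two means, or some incorrect statistic falls below `θ - κ`,
i.e. `dδ/2 + κ` under its mean `(1 + δ)d`. A union bound over these `1 + (n - 1)τ` events and
the two tail bounds, both evaluated at the half-separation `dδ/2`, give the estimate;
`δ ≥ -2κ/d` is exactly what makes the left-tail deviation `dδ/2 + κ` nonnegative.
-/

open MeasureTheory Real

lemma Fintype.card_subtype_fst_ne {α β : Type*} [Fintype α] [Fintype β] [DecidableEq α]
    (a : α) : Fintype.card {p : α × β // p.1 ≠ a} = (Fintype.card α - 1) * Fintype.card β := by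
  rw [Fintype.card_congr (Equiv.prodSubtypeFstEquivSubtypeProd (p := (· ≠ a))), Fintype.card_prod,
    Fintype.card_subtype_compl, Fintype.card_subtype_eq]

lemma setOf_iInf_add_lt_subset {Ω ι : Type*} [Nonempty ι] (X : ι → Ω → ℝ) (Y : Ω → ℝ)
    (κ θ : ℝ) :
    {ω | ⨅ i, (X i ω + κ) < Y ω} ⊆ {ω | θ < Y ω} ∪ ⋃ i, {ω | X i ω < θ - κ} := by
  intro ω hω
  rcases lt_or_ge θ (Y ω) with hY | hY
  · exact Or.inl hY
  · obtain ⟨i, hi⟩ := exists_lt_of_ciInf_lt (lt_of_lt_of_le hω hY)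
    exact Or.inr (Set.mem_iUnion.2 ⟨i, by simp only [Set.mem_ofPred_eq]; linarith⟩)

lemma measureReal_le_add_sum_of_subset_union_iUnion {Ω ι : Type*} [MeasurableSpace Ω]
    (μ : Measure Ω) [IsFiniteMeasure μ] [Fintype ι] {E A : Set Ω} {B : ι → Set Ω}
    (h : E ⊆ A ∪ ⋃ i, B i) : μ.real E ≤ μ.real A + ∑ i, μ.real (B i) :=
  (measureReal_mono h).trans <|
    (measureReal_union_le _ _).trans (add_le_add_right (measureReal_iUnion_fintype_le _) _)

lemma chiSq_tail_exponent_half_separation {d δ : ℝ} (hd : 0 < d) (hδ : 0 ≤ δ) :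
    -(d * δ / 2) ^ 2 / (4 * d + 2 * (d * δ / 2)) = -(d * δ ^ 2) / (4 * δ + 16) := by
  rw [div_eq_div_iff (by positivity) (by positivity)]
  ring

theorem retrieval_error_rate_bound_general
    {Ω : Type*} [MeasurableSpace Ω] (P : Measure Ω) [IsProbabilityMeasure P]
    (n τ d : ℕ) (hn : 2 ≤ n) (hd : 1 ≤ d)
    (δ : ℝ) (σ2 : ℝ) (κ : ℝ)
    (k : Fin n) (t : Fin τ)
    (Zk : Ω → ℝ) (Z : Fin n → Fin τ → Ω → ℝ) (E : Set Ω)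
    (H1 : E ⊆ {ω | (⨅ p : {p : Fin n × Fin τ // p.1 ≠ k}, (Z p.1.1 p.1.2 ω + κ)) < Zk ω})
    (H2 : ∀ θ : ℝ, (d : ℝ) ≤ θ →
      (P {ω | θ < Zk ω}).toReal ≤ exp (-(θ - d) ^ 2 / (4 * d + 2 * (θ - d))))
    (H3 : ∀ i : Fin n, i ≠ k → ∀ s : Fin τ, ∀ u : ℝ, 0 ≤ u →
      (P {ω | Z i s ω < (1 + δ) * d - u}).toReal ≤
        exp (-u ^ 2 / (2 * σ2 * d + (2 / 3) * u)))
    (hδ : δ ≥ max 0 (-(2 * κ) / d)) :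
    (P E).toReal ≤
      exp (-(d * δ ^ 2) / (4 * δ + 16)) +
        ((n : ℝ) - 1) * τ *
          exp (-(d * δ / 2 + κ) ^ 2 / (2 * σ2 * d + (2 / 3) * (d * δ / 2 + κ))) := by
  have hd' : (0 : ℝ) < d := by exact_mod_cast hd
  have hδ0 : 0 ≤ δ := le_of_max_le_left hδ
  have hu : 0 ≤ d * δ / 2 + κ := by
    have := (div_le_iff₀ hd').1 (le_of_max_le_right hδ)
    linarith
  obtain ⟨j, hj⟩ := Fintype.exists_ne_of_one_lt_card (by rw [Fintype.card_fin]; omega) k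
  have : Nonempty {p : Fin n × Fin τ // p.1 ≠ k} := ⟨⟨(j, t), hj⟩⟩
  have hcover := H1.trans <| setOf_iInf_add_lt_subset
    (fun (p : {p : Fin n × Fin τ // p.1 ≠ k}) ω ↦ Z p.1.1 p.1.2 ω) Zk κ (d + d * δ / 2)
  calc (P E).toReal
      ≤ P.real {ω | d + d * δ / 2 < Zk ω} +
          ∑ p : {p : Fin n × Fin τ // p.1 ≠ k}, P.real {ω | Z p.1.1 p.1.2 ω < d + d * δ / 2 - κ} :=
        measureReal_le_add_sum_of_subset_union_iUnion P hcover
    _ ≤ exp (-(d * δ ^ 2) / (4 * δ + 16)) + ∑ _p : {p : Fin n × Fin τ // p.1 ≠ k},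
          exp (-(d * δ / 2 + κ) ^ 2 / (2 * σ2 * d + (2 / 3) * (d * δ / 2 + κ))) := by
        gcongr with p
        · have := H2 (d + d * δ / 2) (le_add_of_nonneg_right (by positivity))
          rwa [add_sub_cancel_left, chiSq_tail_exponent_half_separation hd' hδ0] at this
        · have := H3 p.1.1 p.2 p.1.2 _ hu
          rwa [show (1 + δ) * d - (d * δ / 2 + κ) = d + d * δ / 2 - κ by ring] at this
    _ = _ := by
        rw [Finset.sum_const, Finset.card_univ, Fintype.card_subtype_fst_ne, Fintype.card_fin,
          Fintype.card_fin, nsmul_eq_mul, Nat.cast_mul, Nat.cast_pred (by omega)]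

/-- **Theorem 3.4 (Bounding Retrieval Error Rate).**
Given `n ≥ 2` tasks and `τ ≥ 1` signature components per task, embedding dimension `d ≥ 1`,
separation factor `δ ≥ 0`, variance proxy `σ2 > 0` and log-volume gap `κ`, if the retrieval
error event `E` forces the correct-cluster Mahalanobis statistic `Zk` to exceed the minimum of
the incorrect-cluster statistics shifted by `κ` (H1), `Zk` satisfies the chi-square right-tail
bound with `d` degrees of freedom (H2), each incorrect statistic satisfies a Bernstein-type
left-tail bound with mean `(1+δ)d` and variance proxy `σ2·d` (H3), and `δ ≥ max(0, -2κ/d)`,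
then `P(E) ≤ exp(-dδ²/(4δ+16)) + (n-1)τ·exp(-(dδ/2+κ)²/(2σ2·d+(2/3)(dδ/2+κ)))`. -/
theorem retrieval_error_rate_bound
    {Ω : Type*} [MeasurableSpace Ω] (P : Measure Ω) [IsProbabilityMeasure P]
    (n τ d : ℕ) (hn : 2 ≤ n) (hτ : 1 ≤ τ) (hd : 1 ≤ d)
    (δ : ℝ) (hδ0 : 0 ≤ δ) (σ2 : ℝ) (hσ2 : 0 < σ2) (κ : ℝ)
    (k : Fin n) (t : Fin τ)
    (Zk : Ω → ℝ) (Z : Fin n → Fin τ → Ω → ℝ) (E : Set Ω)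
    (H1 : E ⊆ {ω | (⨅ p : {p : Fin n × Fin τ // p.1 ≠ k}, (Z p.1.1 p.1.2 ω + κ)) < Zk ω})
    (H2 : ∀ θ : ℝ, (d : ℝ) ≤ θ →
      (P {ω | θ < Zk ω}).toReal ≤ exp (-(θ - d) ^ 2 / (4 * d + 2 * (θ - d))))
    (H3 : ∀ i : Fin n, i ≠ k → ∀ s : Fin τ, ∀ u : ℝ, 0 ≤ u →
      (P {ω | Z i s ω < (1 + δ) * d - u}).toReal ≤
        exp (-u ^ 2 / (2 * σ2 * d + (2 / 3) * u)))
    (hδ : δ ≥ max 0 (-(2 * κ) / d)) :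
    (P E).toReal ≤
      exp (-(d * δ ^ 2) / (4 * δ + 16)) +
        ((n : ℝ) - 1) * τ *
          exp (-(d * δ / 2 + κ) ^ 2 / (2 * σ2 * d + (2 / 3) * (d * δ / 2 + κ))) :=
  retrieval_error_rate_bound_general P n τ d hn hd δ σ2 κ k t Zk Z E H1 H2 H3 hδ
end

section
/- Let d > 0, σ² > 0 and κ ∈ ℝ, set M = 3dσ² − κ, and assume M² − 24dσ²κ ≥ 0. Let δ ≥ 0 satisfy δ ≥ (2/d)·[(1/4)(M + √(M² − 24dσ²κ)) − κ], and assume 2σ²d + (2/3)(dδ/2 + κ) > 0. Then exp(−dδ²/(4δ + 16)) ≥ exp(−(dδ/2 + κ)²/(2σ²d + (2/3)(dδ/2 + κ))). -/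
open Real

/-- **Eq. a10 with its derivation (Eq. a11–a13) in the proof of Theorem 3.5.**
If the separation factor `δ ≥ 0` satisfies
`δ ≥ (2/d)·[(1/4)(M + √(M² - 24dσ²κ)) - κ]` with `M = 3dσ² - κ`, and the denominator
`2σ²d + (2/3)(dδ/2 + κ)` is positive, then the first exponential term of the retrieval error
bound dominates the second:
`exp(-dδ²/(4δ+16)) ≥ exp(-(dδ/2+κ)²/(2σ²d+(2/3)(dδ/2+κ)))`. -/
theorem first_exponential_dominates
    (d σ2 κ M : ℝ) (hd : 0 < d) (hσ2 : 0 < σ2) (hM : M = 3 * d * σ2 - κ)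
    (hdisc : M ^ 2 - 24 * d * σ2 * κ ≥ 0)
    (δ : ℝ) (hδ0 : 0 ≤ δ)
    (hδ : δ ≥ (2 / d) * ((1 / 4) * (M + Real.sqrt (M ^ 2 - 24 * d * σ2 * κ)) - κ))
    (hden : 0 < 2 * σ2 * d + (2 / 3) * (d * δ / 2 + κ)) :
    exp (-(d * δ ^ 2) / (4 * δ + 16)) ≥
      exp (-(d * δ / 2 + κ) ^ 2 / (2 * σ2 * d + (2 / 3) * (d * δ / 2 + κ))) := by
  set s := Real.sqrt (M ^ 2 - 24 * d * σ2 * κ) with hs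
  have hs0 : 0 ≤ s := Real.sqrt_nonneg _
  have hs2 : s ^ 2 = M ^ 2 - 24 * d * σ2 * κ := Real.sq_sqrt hdisc
  set z := d * δ / 2 + κ with hz
  -- from hδ: z ≥ (M + s)/4
  have hz4 : z ≥ (M + s) / 4 := by
    have h : (2 / d) * ((1 / 4) * (M + s) - κ) ≤ δ := hδ
    rw [div_mul_eq_mul_div, div_le_iff₀ hd] at h
    rw [hz]
    linarith
  -- key quadratic inequality: z² ≥ (M/2) z - (3/2) σ2 d κ
  have hquad : z ^ 2 - (M / 2) * z + (3 / 2) * d * σ2 * κ ≥ 0 := by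
    nlinarith [mul_nonneg (by linarith : (0:ℝ) ≤ z - (M + s) / 4)
      (by nlinarith : (0:ℝ) ≤ z - (M - s) / 4)]
  apply Real.exp_le_exp.mpr
  rw [div_le_div_iff₀ hden (by positivity : (0:ℝ) < 4 * δ + 16)]
  have h1 : d * δ ^ 2 * (2 * σ2 * d + (2 / 3) * z) ≤ (d * δ / 4) * (4 * δ + 16) * (2 * σ2 * d + (2 / 3) * z) := by
    have : d * δ ^ 2 ≤ (d * δ / 4) * (4 * δ + 16) := by nlinarith
    exact mul_le_mul_of_nonneg_right this (le_of_lt hden)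
  have h2 : (d * δ / 4) * (2 * σ2 * d + (2 / 3) * z) ≤ z ^ 2 := by
    have hdd : d * δ / 4 = (z - κ) / 2 := by rw [hz]; ring
    rw [hM] at hquad
    nlinarith [hquad]
  nlinarith [mul_le_mul_of_nonneg_right h2 (by positivity : (0:ℝ) ≤ 4 * δ + 16), h1]
end

section
/- Let d > 0, σ² > 0, κ ∈ ℝ, let n ≥ 2 and τ ≥ 1 be natural numbers, set N = (n−1)τ + 1 and M = 3dσ² − κ, and let ε ∈ (0, N). Assume M² − 24dσ²κ ≥ 0 and 2σ²d + (2/3)(dδ/2 + κ) > 0, where δ ≥ 0 satisfies δ ≥ (2/d)·max{ (1/4)(M + √(M² − 24dσ²κ)) − κ , log(N/ε)·(1 + √(1 + 4d/log(N/ε))) }. Then exp(−dδ²/(4δ + 16)) + (n−1)·τ·exp(−(dδ/2 + κ)²/(2σ²d + (2/3)(dδ/2 + κ))) ≤ ε. -/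
open Real

private lemma aux_key1 (d δ L ls : ℝ) (hd : 0 < d) (hL : 0 < L) (hls : 0 ≤ ls)
    (hls2 : ls ^ 2 = L ^ 2 + 4 * d * L) (h : L + ls ≤ d * δ / 2) :
    L * (4 * δ + 16) ≤ d * δ ^ 2 := by
  have h1 : 0 ≤ d * δ / 2 - L - ls := by linarith
  have h2 : 0 ≤ d * δ / 2 - L + ls := by linarith
  have key : (d * δ / 2 - L) ^ 2 - ls ^ 2 ≥ 0 := by nlinarith [mul_nonneg h1 h2]
  have key2 : d * (L * (4 * δ + 16)) ≤ d * (d * δ ^ 2) := by nlinarith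
  exact le_of_mul_le_mul_left key2 hd

private lemma aux_key2 (x M c s2 : ℝ) (hs20 : 0 ≤ s2) (hs22 : s2 ^ 2 = M ^ 2 - 8 * c)
    (hx1 : (M + s2) / 4 ≤ x) :
    0 ≤ 2 * x ^ 2 - M * x + c := by
  have h1 : 0 ≤ x - (M + s2) / 4 := by linarith
  have h2 : 0 ≤ x - (M - s2) / 4 := by linarith
  nlinarith [mul_nonneg h1 h2]

private lemma aux_key3 (x σ2 d κ : ℝ)
    (hQ : 0 ≤ 2 * x ^ 2 - (3 * d * σ2 - κ) * x + 3 * d * σ2 * κ) :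
    ((x - κ) / 2) * (2 * σ2 * d + (2 / 3) * x) ≤ x ^ 2 := by
  nlinarith [hQ]

/-- **Analytic content of Theorem 3.5 (Keeping Error Rate Arbitrarily Low).**
With `N = (n-1)τ + 1` and `M = 3dσ² - κ`, if the separation factor `δ ≥ 0` satisfies
`δ ≥ (2/d) · max{ (1/4)(M + √(M² - 24dσ²κ)) - κ, log(N/ε)·(1 + √(1 + 4d/log(N/ε))) }`,
then the right-hand side of the retrieval error bound of Theorem 3.4 is at most `ε`:
`exp(-dδ²/(4δ+16)) + (n-1)τ·exp(-(dδ/2+κ)²/(2σ²d+(2/3)(dδ/2+κ))) ≤ ε`. -/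
theorem error_bound_le_epsilon
    (d σ2 κ : ℝ) (hd : 0 < d) (hσ2 : 0 < σ2)
    (n τ : ℕ) (hn : 2 ≤ n) (hτ : 1 ≤ τ)
    (N M : ℝ) (hN : N = ((n : ℝ) - 1) * τ + 1) (hM : M = 3 * d * σ2 - κ)
    (ε : ℝ) (hε0 : 0 < ε) (hεN : ε < N)
    (hdisc : M ^ 2 - 24 * d * σ2 * κ ≥ 0)
    (δ : ℝ) (hδ0 : 0 ≤ δ)
    (hden : 0 < 2 * σ2 * d + (2 / 3) * (d * δ / 2 + κ))
    (hδ : δ ≥ (2 / d) *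
      max ((1 / 4) * (M + Real.sqrt (M ^ 2 - 24 * d * σ2 * κ)) - κ)
        (Real.log (N / ε) * (1 + Real.sqrt (1 + 4 * d / Real.log (N / ε))))) :
    exp (-(d * δ ^ 2) / (4 * δ + 16)) +
      ((n : ℝ) - 1) * τ *
        exp (-(d * δ / 2 + κ) ^ 2 / (2 * σ2 * d + (2 / 3) * (d * δ / 2 + κ))) ≤ ε := by
  -- basic facts
  have hn1 : (1 : ℝ) ≤ (n : ℝ) - 1 := by
    have : (2 : ℝ) ≤ (n : ℝ) := by exact_mod_cast hn
    linarith
  have hτ1 : (1 : ℝ) ≤ (τ : ℝ) := by exact_mod_cast hτ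
  have hc0 : (0 : ℝ) ≤ ((n : ℝ) - 1) * τ := by nlinarith
  have hN0 : 0 < N := by nlinarith
  have hNε : 1 < N / ε := (one_lt_div hε0).2 hεN
  set L := Real.log (N / ε) with hLdef
  have hL : 0 < L := Real.log_pos hNε
  have hεN' : ε / N = Real.exp (-L) := by
    rw [Real.exp_neg, hLdef, Real.exp_log (by positivity)]
    field_simp
  -- split the max
  set A := (1 / 4) * (M + Real.sqrt (M ^ 2 - 24 * d * σ2 * κ)) - κ with hAdef
  set B := L * (1 + Real.sqrt (1 + 4 * d / L)) with hBdef
  have h2d : (0 : ℝ) ≤ 2 / d := by positivity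
  have hA' : 2 * A ≤ d * δ := by
    have h1 : (2 / d) * A ≤ δ :=
      le_trans (mul_le_mul_of_nonneg_left (le_max_left A B) h2d) hδ
    have h2 := mul_le_mul_of_nonneg_left h1 hd.le
    have : d * ((2 / d) * A) = 2 * A := by field_simp
    linarith [this ▸ h2]
  have hB' : 2 * B ≤ d * δ := by
    have h1 : (2 / d) * B ≤ δ :=
      le_trans (mul_le_mul_of_nonneg_left (le_max_right A B) h2d) hδ
    have h2 := mul_le_mul_of_nonneg_left h1 hd.le
    have : d * ((2 / d) * B) = 2 * B := by field_simp
    linarith [this ▸ h2]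
  -- branch B: the square-root s
  set s := Real.sqrt (1 + 4 * d / L) with hsdef
  have hs0 : 0 ≤ s := Real.sqrt_nonneg _
  have hs2 : s ^ 2 = 1 + 4 * d / L := Real.sq_sqrt (by positivity)
  have hs1 : 1 ≤ s := by
    nlinarith [div_pos (by positivity : (0:ℝ) < 4 * d) hL]
  have hLne : L ≠ 0 := hL.ne'
  have hLs2 : (L * s) ^ 2 = L ^ 2 + 4 * d * L := by
    rw [mul_pow, hs2]; field_simp
  have haL : L + L * s ≤ d * δ / 2 := by
    have h := hB'
    have he : 2 * B = 2 * L + 2 * (L * s) := by rw [hBdef]; ring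
    linarith
  have hdδL : 4 * L ≤ d * δ := by
    have := mul_le_mul_of_nonneg_left hs1 hL.le
    linarith
  -- term 1 bound: L ≤ dδ²/(4δ+16)
  have hden1 : (0 : ℝ) < 4 * δ + 16 := by linarith
  have ht1 : L * (4 * δ + 16) ≤ d * δ ^ 2 :=
    aux_key1 d δ L (L * s) hd hL (by positivity) hLs2 haL
  have hterm1 : Real.exp (-(d * δ ^ 2) / (4 * δ + 16)) ≤ ε / N := by
    rw [hεN']
    apply Real.exp_le_exp.2
    rw [neg_div, neg_le_neg_iff]
    rw [le_div_iff₀ hden1]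
    exact ht1
  -- branch A: x = dδ/2 + κ
  set x := d * δ / 2 + κ with hxdef
  set s2 := Real.sqrt (M ^ 2 - 24 * d * σ2 * κ) with hs2def
  have hs20 : 0 ≤ s2 := Real.sqrt_nonneg _
  have hs22 : s2 ^ 2 = M ^ 2 - 24 * d * σ2 * κ := Real.sq_sqrt hdisc
  have hx1 : (M + s2) / 4 ≤ x := by
    have : 2 * ((1 / 4) * (M + s2) - κ) ≤ d * δ := hA'
    simp only [hxdef]; linarith
  have hx2 : (M - s2) / 4 ≤ x := by linarith
  have hQ : 0 ≤ 2 * x ^ 2 - M * x + 3 * d * σ2 * κ :=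
    aux_key2 x M (3 * d * σ2 * κ) s2 hs20 (by rw [hs22]; ring) hx1
  -- x²/den ≥ (x - κ)/2 = dδ/4 ≥ L
  have hden2 : (0 : ℝ) < 2 * σ2 * d + (2 / 3) * x := hden
  have ht2 : L * (2 * σ2 * d + (2 / 3) * x) ≤ x ^ 2 := by
    have hstep : (d * δ / 4) * (2 * σ2 * d + (2 / 3) * x) ≤ x ^ 2 := by
      have hxk : d * δ / 4 = (x - κ) / 2 := by simp only [hxdef]; ring
      rw [hxk]
      refine aux_key3 x σ2 d κ ?_
      rw [hM] at hQ; linarith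
    have hLle : L ≤ d * δ / 4 := by linarith
    calc L * (2 * σ2 * d + (2 / 3) * x) ≤ (d * δ / 4) * (2 * σ2 * d + (2 / 3) * x) :=
          mul_le_mul_of_nonneg_right hLle hden2.le
      _ ≤ x ^ 2 := hstep
  have hterm2 : Real.exp (-(d * δ / 2 + κ) ^ 2 / (2 * σ2 * d + (2 / 3) * (d * δ / 2 + κ)))
      ≤ ε / N := by
    rw [hεN']
    apply Real.exp_le_exp.2
    rw [neg_div, neg_le_neg_iff, le_div_iff₀ hden2]
    exact ht2
  -- combine
  have hcN : ((n : ℝ) - 1) * τ = N - 1 := by rw [hN]; ring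
  calc exp (-(d * δ ^ 2) / (4 * δ + 16)) +
        ((n : ℝ) - 1) * τ *
          exp (-(d * δ / 2 + κ) ^ 2 / (2 * σ2 * d + (2 / 3) * (d * δ / 2 + κ)))
      ≤ ε / N + ((n : ℝ) - 1) * τ * (ε / N) := by
        have := mul_le_mul_of_nonneg_left hterm2 hc0
        linarith [hterm1]
    _ = ε := by rw [hcN]; field_simp; ring
end

section
/- Let (Ω, P) be a probability space, n ≥ 2, τ ≥ 1, d ≥ 1 a natural number, σ² > 0, κ ∈ ℝ, N = (n−1)τ + 1, M = 3dσ² − κ, and ε ∈ (0, N). Fix (k,t); let Z_k be a real random variable, (Z_{i,s}) for i ≠ k, s ∈ {1,…,τ} real random variables, and E an event, satisfying: (H1) E ⊆ {Z_k > min over (i,s), i ≠ k, of (Z_{i,s} + κ)}; (H2) for every θ ≥ d, P(Z_k > θ) ≤ exp(−(θ−d)²/(4d + 2(θ−d))); (H3) for every (i,s) with i ≠ k and every u ≥ 0, P(Z_{i,s} < (1+δ)d − u) ≤ exp(−u²/(2σ²d + (2/3)u)). Assume M² − 24dσ²κ ≥ 0, 2σ²d + (2/3)(dδ/2 + κ)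 > 0, δ ≥ max(0, −2κ/d), and δ ≥ (2/d)·max{ (1/4)(M + √(M² − 24dσ²κ)) − κ , log(N/ε)·(1 + √(1 + 4d/log(N/ε))) }. Then P(E) ≤ ε. -/
open MeasureTheory Real

set_option maxHeartbeats 1000000 in
/-- **Theorem 3.5 (Keeping Error Rate Arbitrarily Low), probabilistic form.**
Under the tail-bound hypotheses of Theorem 3.4 — (H1) the error event forces the correct
Mahalanobis statistic above the shifted minimum of incorrect ones, (H2) the chi-square
right-tail bound with `d` degrees of freedom for `Zk`, (H3) the Bernstein-type left-tail bound
with mean `(1+δ)d` and variance proxy `σ²d` for the incorrect statistics — if the cluster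
separation factor `δ` is at least the threshold of Eq. 9 (Eq. a16), with `N = (n-1)τ + 1`,
`M = 3dσ² - κ` and `0 < ε < N`, then the retrieval error probability satisfies `P(E) ≤ ε`. -/
theorem retrieval_error_arbitrarily_low
    {Ω : Type*} [MeasurableSpace Ω] (P : Measure Ω) [IsProbabilityMeasure P]
    (n τ d : ℕ) (hn : 2 ≤ n) (hτ : 1 ≤ τ) (hd : 1 ≤ d)
    (σ2 : ℝ) (hσ2 : 0 < σ2) (κ : ℝ)
    (N M : ℝ) (hN : N = ((n : ℝ) - 1) * τ + 1) (hM : M = 3 * (d : ℝ) * σ2 - κ)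
    (ε : ℝ) (hε0 : 0 < ε) (hεN : ε < N)
    (δ : ℝ) (hδ0 : 0 ≤ δ)
    (k : Fin n) (t : Fin τ)
    (Zk : Ω → ℝ) (Z : Fin n → Fin τ → Ω → ℝ) (E : Set Ω)
    (H1 : E ⊆ {ω | (⨅ p : {p : Fin n × Fin τ // p.1 ≠ k}, (Z p.1.1 p.1.2 ω + κ)) < Zk ω})
    (H2 : ∀ θ : ℝ, (d : ℝ) ≤ θ →
      (P {ω | θ < Zk ω}).toReal ≤ exp (-(θ - d) ^ 2 / (4 * d + 2 * (θ - d))))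
    (H3 : ∀ i : Fin n, i ≠ k → ∀ s : Fin τ, ∀ u : ℝ, 0 ≤ u →
      (P {ω | Z i s ω < (1 + δ) * d - u}).toReal ≤
        exp (-u ^ 2 / (2 * σ2 * d + (2 / 3) * u)))
    (hdisc : M ^ 2 - 24 * d * σ2 * κ ≥ 0)
    (hden : 0 < 2 * σ2 * d + (2 / 3) * ((d : ℝ) * δ / 2 + κ))
    (hδmax : δ ≥ max 0 (-(2 * κ) / d))
    (hδ : δ ≥ (2 / d) *
      max ((1 / 4) * (M + Real.sqrt (M ^ 2 - 24 * d * σ2 * κ)) - κ)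
        (Real.log (N / ε) * (1 + Real.sqrt (1 + 4 * d / Real.log (N / ε))))) :
    (P E).toReal ≤ ε := by
  have hd0 : (0 : ℝ) < d := by exact_mod_cast hd
  have hN0 : (0 : ℝ) < N := lt_trans hε0 hεN
  -- notation
  obtain ⟨x, hxdef⟩ : ∃ x : ℝ, x = (d : ℝ) * δ / 2 := ⟨_, rfl⟩
  obtain ⟨u, hudef⟩ : ∃ u : ℝ, u = x + κ := ⟨_, rfl⟩
  have hx0 : 0 ≤ x := by rw [hxdef]; positivity
  have hu0 : 0 ≤ u := by
    have h2 : -(2 * κ) / (d : ℝ) ≤ δ := le_trans (le_max_right _ _) hδmax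
    rw [div_le_iff₀ hd0] at h2
    rw [hudef, hxdef]; nlinarith
  -- extract the two components of the max condition
  have hxmax : max ((1 / 4) * (M + Real.sqrt (M ^ 2 - 24 * d * σ2 * κ)) - κ)
      (Real.log (N / ε) * (1 + Real.sqrt (1 + 4 * d / Real.log (N / ε)))) ≤ x := by
    have := mul_le_mul_of_nonneg_left hδ (le_of_lt (by positivity : (0:ℝ) < (d:ℝ)/2))
    calc max _ _ = (d : ℝ)/2 * ((2 / d) * max _ _) := by field_simp
      _ ≤ (d : ℝ)/2 * δ := this
      _ = x := by rw [hxdef]; ring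
  have hxA : (1 / 4) * (M + Real.sqrt (M ^ 2 - 24 * d * σ2 * κ)) - κ ≤ x :=
    le_trans (le_max_left _ _) hxmax
  have hxB : Real.log (N / ε) * (1 + Real.sqrt (1 + 4 * d / Real.log (N / ε))) ≤ x :=
    le_trans (le_max_right _ _) hxmax
  obtain ⟨L, hLdef⟩ : ∃ L : ℝ, L = Real.log (N / ε) := ⟨_, rfl⟩
  rw [← hLdef] at hxB
  have hL : 0 < L := hLdef ▸ Real.log_pos ((one_lt_div hε0).2 hεN)
  -- the chi-square exponent is at least L
  have hchi_den : (0 : ℝ) < 4 * d + 2 * x := by positivity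
  have hchiL : L ≤ x ^ 2 / (4 * d + 2 * x) := by
    rw [le_div_iff₀ hchi_den]
    obtain ⟨s, hsdef⟩ : ∃ s : ℝ, s = Real.sqrt (1 + 4 * d / L) := ⟨_, rfl⟩
    rw [← hsdef] at hxB
    have hs0 : 0 ≤ s := hsdef ▸ Real.sqrt_nonneg _
    have hs2 : s ^ 2 = 1 + 4 * d / L := by rw [hsdef]; exact Real.sq_sqrt (by positivity)
    have hxLs : L * (1 + s) ≤ x := hxB
    have hs2' : L * (s ^ 2) = L + 4 * d := by
      rw [hs2]; field_simp
    have hLs : 0 ≤ L * s := by positivity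
    have hxL : L * s ≤ x - L := by nlinarith
    have hsq : (L * s) ^ 2 ≤ (x - L) ^ 2 := pow_le_pow_left₀ hLs hxL 2
    have hval : (L * s) ^ 2 = L * (L + 4 * d) := by
      have : (L * s) ^ 2 = L * (L * s ^ 2) := by ring
      rw [this, hs2']
    linarith [hsq, hval]
  -- exp(-chi) ≤ ε / N
  have hexpL : Real.exp (-L) = ε / N := by
    rw [hLdef, ← Real.log_inv, Real.exp_log (by positivity), inv_div]
  have hchi_bound : Real.exp (-x ^ 2 / (4 * d + 2 * x)) ≤ ε / N := by
    rw [← hexpL]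
    apply Real.exp_le_exp.2
    rw [neg_div]
    exact neg_le_neg hchiL
  -- the Bernstein exponent dominates the chi-square exponent
  have hDb : (0 : ℝ) < 2 * σ2 * d + (2 / 3) * u := by
    rw [hudef, hxdef]; exact hden
  have hquad : 0 ≤ 2 * u ^ 2 - M * u + 3 * d * σ2 * κ := by
    have hs0 : 0 ≤ Real.sqrt (M ^ 2 - 24 * d * σ2 * κ) := Real.sqrt_nonneg _
    have hs2 : (Real.sqrt (M ^ 2 - 24 * d * σ2 * κ)) ^ 2 = M ^ 2 - 24 * d * σ2 * κ :=
      Real.sq_sqrt hdisc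
    have h4u : Real.sqrt (M ^ 2 - 24 * d * σ2 * κ) ≤ 4 * u - M := by
      have : (1 / 4) * (M + Real.sqrt (M ^ 2 - 24 * d * σ2 * κ)) ≤ u := by
        rw [hudef]; linarith
      linarith
    nlinarith [sq_nonneg (4 * u - M)]
  have hbern_ge : x ^ 2 / (4 * d + 2 * x) ≤ u ^ 2 / (2 * σ2 * d + (2 / 3) * u) := by
    have h1 : x ^ 2 / (4 * d + 2 * x) ≤ x / 2 := by
      rw [div_le_div_iff₀ hchi_den two_pos]
      nlinarith
    have h2 : x / 2 ≤ u ^ 2 / (2 * σ2 * d + (2 / 3) * u) := by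
      rw [div_le_div_iff₀ two_pos hDb]
      have hexp : u ^ 2 * 2 - x * (2 * σ2 * (d : ℝ) + 2 / 3 * u) =
          2 / 3 * (2 * u ^ 2 - M * u + 3 * (d : ℝ) * σ2 * κ) := by
        rw [hM, hudef]; ring
      linarith [hquad]
    linarith
  have hbern_bound : Real.exp (-u ^ 2 / (2 * σ2 * d + (2 / 3) * u)) ≤ ε / N := by
    refine le_trans ?_ hchi_bound
    apply Real.exp_le_exp.2
    rw [neg_div, neg_div]
    exact neg_le_neg hbern_ge
  -- index type of wrong clusters
  haveI hne : Nonempty {p : Fin n × Fin τ // p.1 ≠ k} := by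
    have h0 : (0 : ℕ) < n := by omega
    have h1 : (1 : ℕ) < n := by omega
    by_cases hk : k = ⟨0, h0⟩
    · exact ⟨⟨(⟨1, h1⟩, ⟨0, by omega⟩), by simp [hk, Fin.ext_iff]⟩⟩
    · exact ⟨⟨(⟨0, h0⟩, ⟨0, by omega⟩), by simpa [Fin.ext_iff] using fun h => hk (by simp [Fin.ext_iff, ← h])⟩⟩
  -- the union bound decomposition
  set θ : ℝ := (d : ℝ) + x with hθdef
  set A : Set Ω := {ω | θ < Zk ω} with hAdef
  set B : {p : Fin n × Fin τ // p.1 ≠ k} → Set Ω :=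
    fun p => {ω | Z p.1.1 p.1.2 ω < (1 + δ) * d - u} with hBdef
  clear hδ hδmax
  have hsub : E ⊆ A ∪ ⋃ p, B p := by
    intro ω hω
    have h1 := H1 hω
    by_cases hZk : θ < Zk ω
    · exact Or.inl hZk
    · push_neg at hZk
      right
      have hlt : (⨅ p : {p : Fin n × Fin τ // p.1 ≠ k}, (Z p.1.1 p.1.2 ω + κ)) < θ :=
        lt_of_lt_of_le h1 hZk
      obtain ⟨p, hp⟩ := exists_lt_of_ciInf_lt hlt
      refine Set.mem_iUnion.2 ⟨p, ?_⟩
      simp only [hBdef, Set.mem_setOf_eq]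
      have : (1 + δ) * d - u = θ - κ := by rw [hθdef, hudef, hxdef]; ring
      rw [this]
      linarith
  -- probability bound
  have hPE : P E ≤ P A + ∑' p, P (B p) :=
    le_trans (measure_mono hsub) (le_trans (measure_union_le _ _)
      (by gcongr; exact measure_iUnion_le _))
  have hfin : P A + ∑' p, P (B p) ≠ ⊤ := by
    rw [tsum_fintype]
    exact ENNReal.add_ne_top.2 ⟨measure_ne_top _ _,
      (ENNReal.sum_lt_top.2 fun _ _ => measure_lt_top _ _).ne⟩
  have hPE' : (P E).toReal ≤ (P A).toReal + ∑ p, (P (B p)).toReal := by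
    have := ENNReal.toReal_mono hfin hPE
    rwa [tsum_fintype, ENNReal.toReal_add (measure_ne_top _ _)
      (ENNReal.sum_lt_top.2 fun _ _ => measure_lt_top _ _).ne, ENNReal.toReal_sum
      (fun _ _ => measure_ne_top _ _)] at this
  -- bound each term
  have hA_bound : (P A).toReal ≤ ε / N := by
    have hθd : (d : ℝ) ≤ θ := by rw [hθdef]; linarith
    have := H2 θ hθd
    have hθx : θ - (d : ℝ) = x := by rw [hθdef]; ring
    rw [hθx] at this
    exact le_trans this hchi_bound
  have hB_bound : ∀ p : {p : Fin n × Fin τ // p.1 ≠ k}, (P (B p)).toReal ≤ ε / N := by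
    intro p
    exact le_trans (H3 p.1.1 p.2 p.1.2 u hu0) hbern_bound
  -- cardinality
  have hcard : (Fintype.card {p : Fin n × Fin τ // p.1 ≠ k} : ℝ) = N - 1 := by
    have e : {p : Fin n × Fin τ // p.1 ≠ k} ≃ {i : Fin n // i ≠ k} × Fin τ :=
      { toFun := fun p => (⟨p.1.1, p.2⟩, p.1.2)
        invFun := fun q => ⟨(q.1.1, q.2), q.1.2⟩
        left_inv := fun _ => rfl
        right_inv := fun _ => rfl }
    have h1 : Fintype.card {i : Fin n // i ≠ k} = n - 1 := by
      have := Fintype.card_subtype_compl (fun i : Fin n => i = k)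
      simpa [Fintype.card_subtype_eq] using this
    rw [Fintype.card_congr e, Fintype.card_prod, h1, Fintype.card_fin, hN]
    have : ((n - 1 : ℕ) : ℝ) = (n : ℝ) - 1 := by
      have : (1 : ℕ) ≤ n := by omega
      push_cast [Nat.cast_sub this]; ring
    push_cast [this]; ring
  -- conclude
  have hsum : ∑ p, (P (B p)).toReal ≤ (N - 1) * (ε / N) := by
    calc ∑ p, (P (B p)).toReal ≤ ∑ _p : {p : Fin n × Fin τ // p.1 ≠ k}, ε / N :=
          Finset.sum_le_sum fun p _ => hB_bound p
      _ = (Fintype.card {p : Fin n × Fin τ // p.1 ≠ k} : ℝ) * (ε / N) := by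
          rw [Finset.sum_const, Finset.card_univ, nsmul_eq_mul]
      _ = (N - 1) * (ε / N) := by rw [hcard]
  calc (P E).toReal ≤ (P A).toReal + ∑ p, (P (B p)).toReal := hPE'
    _ ≤ ε / N + (N - 1) * (ε / N) := add_le_add hA_bound hsum
    _ = ε := by field_simp; ring
end
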